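/- Let φ: A → A' be a bijective unital multiplicative *-Lie-Jordan n-map between unital C*-algebras, with P₁ a nontrivial projection, P₂ = I - P₁, such that A' satisfies: X A' φ(P_i) = {0} implies X = 0, for i = 1, 2. Then φ(A_{ii} + B_{ii}) = φ(A_{ii}) + φ(B_{ii}) for all A_{ii}, B_{ii} ∈ P_i A P_i. -/

import Mathlib

set_option linter.unusedSectionVars false

def lieStar {R : Type*} [NonUnitalRing R] [StarRing R] (x y : R) : R := x * y - y * star x
def jordanStar {R : Type*} [NonUnitalRing R] [StarRing R] (x y : R) : R := x * y + y * star x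
def pStar {R : Type*} [NonUnitalRing R] [StarRing R] (x : R) (l : List R) : R := l.foldl lieStar x
def qStar {R : Type*} [NonUnitalRing R] [StarRing R] (x : R) (l : List R) : R := l.foldl jordanStar x

section Aux1

variable {R : Type*} [Ring R] [StarRing R]

lemma pStar_nil (x : R) : pStar x [] = x := rfl
lemma qStar_nil (x : R) : qStar x [] = x := rfl
lemma pStar_cons (x y : R) (l : List R) : pStar x (y :: l) = pStar (lieStar x y) l := rfl
lemma qStar_cons (x y : R) (l : List R) : qStar x (y :: l) = qStar (jordanStar x y) l := rfl

lemma pStar_append (x : R) (l₁ l₂ : List R) :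
    pStar x (l₁ ++ l₂) = pStar (pStar x l₁) l₂ := List.foldl_append

lemma qStar_append (x : R) (l₁ l₂ : List R) :
    qStar x (l₁ ++ l₂) = qStar (qStar x l₁) l₂ := List.foldl_append

lemma lieStar_add_left (x y z : R) : lieStar (x + y) z = lieStar x z + lieStar y z := by
  simp only [lieStar, add_mul, star_add, mul_add]; abel

lemma jordanStar_add_left (x y z : R) : jordanStar (x + y) z = jordanStar x z + jordanStar y z := by
  simp only [jordanStar, add_mul, star_add, mul_add]; abel

lemma lieStar_sub_left' (x y z : R) : lieStar (x - y) z = lieStar x z - lieStar y z := by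
  simp only [lieStar, sub_mul, star_sub, mul_sub]; abel

lemma jordanStar_sub_left' (x y z : R) : jordanStar (x - y) z = jordanStar x z - jordanStar y z := by
  simp only [jordanStar, sub_mul, star_sub, mul_sub]; abel

lemma lieStar_zero_left (z : R) : lieStar 0 z = 0 := by simp [lieStar]

lemma jordanStar_zero_left (z : R) : jordanStar 0 z = 0 := by simp [jordanStar]

lemma lieStar_add_right (x y z : R) : lieStar x (y + z) = lieStar x y + lieStar x z := by
  simp only [lieStar, mul_add, add_mul]; abel

lemma jordanStar_add_right (x y z : R) : jordanStar x (y + z) = jordanStar x y + jordanStar x z := by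
  simp only [jordanStar, mul_add, add_mul]; abel

lemma lieStar_sub_right (x y z : R) : lieStar x y - lieStar x z = lieStar x (y - z) := by
  simp only [lieStar, mul_sub, sub_mul]; abel

lemma jordanStar_sub_right (x y z : R) : jordanStar x y - jordanStar x z = jordanStar x (y - z) := by
  simp only [jordanStar, mul_sub, sub_mul]; abel

lemma lieStar_nsmul (k : ℕ) (x y : R) : lieStar (k • x) y = k • lieStar x y := by
  simp only [lieStar, smul_mul_assoc, star_nsmul, mul_smul_comm, smul_sub]

lemma jordanStar_nsmul (k : ℕ) (x y : R) : jordanStar (k • x) y = k • jordanStar x y := by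
  simp only [jordanStar, smul_mul_assoc, star_nsmul, mul_smul_comm, smul_add]

lemma pStar_add_left (l : List R) : ∀ x y : R, pStar (x + y) l = pStar x l + pStar y l := by
  induction l with
  | nil => intro x y; simp [pStar_nil]
  | cons z l ih =>
      intro x y
      rw [pStar_cons, pStar_cons, pStar_cons, lieStar_add_left, ih]

lemma qStar_add_left (l : List R) : ∀ x y : R, qStar (x + y) l = qStar x l + qStar y l := by
  induction l with
  | nil => intro x y; simp [qStar_nil]
  | cons z l ih =>
      intro x y
      rw [qStar_cons, qStar_cons, qStar_cons, jordanStar_add_left, ih]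

lemma pStar_zero_left (l : List R) : pStar (0 : R) l = 0 := by
  induction l with
  | nil => simp [pStar_nil]
  | cons z l ih => rw [pStar_cons, lieStar_zero_left, ih]

lemma qStar_zero_left (l : List R) : qStar (0 : R) l = 0 := by
  induction l with
  | nil => simp [qStar_nil]
  | cons z l ih => rw [qStar_cons, jordanStar_zero_left, ih]

lemma pStar_sub_left (l : List R) (x y : R) : pStar (x - y) l = pStar x l - pStar y l := by
  have := pStar_add_left l (x - y) y
  rw [sub_add_cancel] at this
  rw [this]; abel

lemma qStar_sub_left (l : List R) (x y : R) : qStar (x - y) l = qStar x l - qStar y l := by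
  have := qStar_add_left l (x - y) y
  rw [sub_add_cancel] at this
  rw [this]; abel

lemma lieStar_one (z : R) : lieStar z 1 = z - star z := by simp [lieStar]

lemma jordanStar_one (z : R) : jordanStar z 1 = z + star z := by simp [jordanStar]

lemma pStar_skew_replicate (k : ℕ) : ∀ z : R, star z = -z →
    pStar z (List.replicate k 1) = (2 ^ k : ℕ) • z := by
  induction k with
  | zero => intro z hz; simp [pStar_nil]
  | succ k ih =>
      intro z hz
      rw [List.replicate_succ, pStar_cons, lieStar_one, hz, sub_neg_eq_add]
      have h2 : z + z = (2 : ℕ) • z := (two_nsmul z).symm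
      rw [h2, ih ((2 : ℕ) • z) (by rw [star_nsmul, hz, smul_neg]),
        smul_smul, ← pow_succ]

lemma qStar_sa_replicate (k : ℕ) : ∀ z : R, star z = z →
    qStar z (List.replicate k 1) = (2 ^ k : ℕ) • z := by
  induction k with
  | zero => intro z hz; simp [qStar_nil]
  | succ k ih =>
      intro z hz
      rw [List.replicate_succ, qStar_cons, jordanStar_one, hz]
      have h2 : z + z = (2 : ℕ) • z := (two_nsmul z).symm
      rw [h2, ih ((2 : ℕ) • z) (by rw [star_nsmul, hz]), smul_smul, ← pow_succ]

lemma pStar_one_replicate (k : ℕ) (z : R) :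
    pStar z (List.replicate (k + 1) 1) = (2 ^ k : ℕ) • (z - star z) := by
  rw [List.replicate_succ, pStar_cons, lieStar_one]
  exact pStar_skew_replicate k _ (by rw [star_sub, star_star]; abel)

lemma qStar_one_replicate (k : ℕ) (z : R) :
    qStar z (List.replicate (k + 1) 1) = (2 ^ k : ℕ) • (z + star z) := by
  rw [List.replicate_succ, qStar_cons, jordanStar_one]
  exact qStar_sa_replicate k _ (by rw [star_add, star_star]; abel)

end Aux1

section Aux2

variable {R : Type*} [Ring R] [StarRing R] [Module ℂ R]

lemma nsmul_pow_cancel (k : ℕ) (w : R) (h : (2 ^ k : ℕ) • w = 0) : w = 0 := by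
  have h' : ((2 ^ k : ℕ) : ℂ) • w = 0 := by rw [Nat.cast_smul_eq_nsmul]; exact h
  rcases smul_eq_zero.mp h' with h | h
  · exact absurd h (by exact_mod_cast pow_ne_zero k (two_ne_zero))
  · exact h

lemma nsmul_pow_inj (k : ℕ) (w₁ w₂ : R) (h : (2 ^ k : ℕ) • w₁ = (2 ^ k : ℕ) • w₂) :
    w₁ = w₂ := by
  have := nsmul_pow_cancel k (w₁ - w₂) (by rw [smul_sub, h, sub_self])
  exact sub_eq_zero.mp this

lemma two_nsmul_cancel (w : R) (h : w + w = 0) : w = 0 := by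
  have : (2 ^ 1 : ℕ) • w = 0 := by rw [pow_one, two_nsmul]; exact h
  exact nsmul_pow_cancel 1 w this

lemma pq_replicate_zero (m : ℕ) (w : R)
    (hwp : pStar w (List.replicate m 1) = 0) (hwq : qStar w (List.replicate m 1) = 0) :
    w = 0 := by
  cases m with
  | zero => simpa [pStar_nil] using hwp
  | succ k =>
      rw [pStar_one_replicate] at hwp
      rw [qStar_one_replicate] at hwq
      have h1 := nsmul_pow_cancel k _ hwp
      have h2 := nsmul_pow_cancel k _ hwq
      have := congrArg₂ (· + ·) h1 h2
      simp only [add_zero] at this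
      apply two_nsmul_cancel
      calc w + w = (w - star w) + (w + star w) := by abel
      _ = 0 := by rw [h1, h2, add_zero]

lemma sa_decomp [StarModule ℂ R] (Z : R) :
    ∃ H₁ H₂ : R, star H₁ = H₁ ∧ star H₂ = H₂ ∧ Z = H₁ + Complex.I • H₂ := by
  refine ⟨(1 / 2 : ℂ) • (Z + star Z), (-(Complex.I) / 2) • (Z - star Z), ?_, ?_, ?_⟩
  · rw [star_smul, star_add, star_star]
    rw [show star (1 / 2 : ℂ) = (1 / 2 : ℂ) by simp]
    rw [add_comm]
  · rw [star_smul, star_sub, star_star]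
    rw [show star (-(Complex.I) / 2 : ℂ) = (Complex.I / 2 : ℂ) by
      simp [Complex.ext_iff]]
    rw [show (Z - star Z) = -(star Z - Z) by abel, smul_neg, ← neg_smul]
    congr 1
    ring
  · rw [smul_smul]
    rw [show Complex.I * (-(Complex.I) / 2) = (1 / 2 : ℂ) by
      simp [div_eq_mul_inv]; ring_nf; simp [Complex.I_sq]; norm_num]
    rw [← smul_add]
    rw [show Z + star Z + (Z - star Z) = (2 : ℂ) • Z by
      rw [two_smul]; abel]
    rw [smul_smul]
    norm_num

end Aux2

/-- Under the condition (†), φ is additive on diagonal Peirce corners. -/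
theorem starLieJordanMap_add_diag {A B : Type*} [NormedRing A] [StarRing A] [CStarRing A] [NormedAlgebra ℂ A] [CompleteSpace A] [StarModule ℂ A] [NormedRing B] [StarRing B] [CStarRing B] [NormedAlgebra ℂ B] [CompleteSpace B] [StarModule ℂ B]
    (n : ℕ) (hn : 2 ≤ n) (φ : A → B) (hbij : Function.Bijective φ) (hφ1 : φ 1 = 1)
    (hp : ∀ (x : A) (l : List A), l.length = n - 1 → φ (pStar x l) = pStar (φ x) (l.map φ))
    (hq : ∀ (x : A) (l : List A), l.length = n - 1 → φ (qStar x l) = qStar (φ x) (l.map φ)) (P : A) (hPidem : P * P = P) (hPsa : star P = P) (hP0 : P ≠ 0) (hP1 : P ≠ 1)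
    (hdag : ∀ Pi : A, (Pi = P ∨ Pi = 1 - P) →
      ∀ X : B, (∀ Z : B, X * Z * φ Pi = 0) → X = 0)
    (Pi : A) (hi : Pi = P ∨ Pi = 1 - P)
    (a b : A) (ha : Pi * a * Pi = a) (hb : Pi * b * Pi = b) :
    φ (a + b) = φ a + φ b := by
  obtain ⟨m, rfl⟩ : ∃ m, n = m + 2 := ⟨n - 2, by omega⟩
  clear hn
  have hPi2 : Pi * Pi = Pi := by
    rcases hi with h | h
    · rw [h, hPidem]
    · rw [h, sub_mul, one_mul, mul_sub, mul_one, hPidem]; abel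
  have hPiS : star Pi = Pi := by
    rcases hi with h | h
    · rw [h, hPsa]
    · rw [h, star_sub, star_one, hPsa]
  obtain ⟨Pj, hPjdef⟩ : ∃ Pj : A, Pj = 1 - Pi := ⟨_, rfl⟩
  have hPj2 : Pj * Pj = Pj := by
    rw [hPjdef, sub_mul, one_mul, mul_sub, mul_one, hPi2]; abel
  have hPjS : star Pj = Pj := by rw [hPjdef, star_sub, star_one, hPiS]
  have hPiPj : Pi * Pj = 0 := by rw [hPjdef, mul_sub, mul_one, hPi2, sub_self]
  have hPjPi : Pj * Pi = 0 := by rw [hPjdef, sub_mul, one_mul, hPi2, sub_self]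
  have hSum : Pi + Pj = 1 := by rw [hPjdef]; abel
  have hdagj : ∀ X : B, (∀ Z : B, X * Z * φ Pj = 0) → X = 0 := by
    intro X hX
    refine hdag Pj ?_ X hX
    rcases hi with h | h
    · right; rw [hPjdef, h]
    · left; rw [hPjdef, h, sub_sub_cancel]
  have hP1' : ∀ (x y : A) (r : List A), r.length = m →
      φ (pStar x (y :: r)) = pStar (φ x) (φ y :: r.map φ) := by
    intro x y r hr
    have := hp x (y :: r) (by simp [hr])
    simpa using this
  have hQ1' : ∀ (x y : A) (r : List A), r.length = m →
      φ (qStar x (y :: r)) = qStar (φ x) (φ y :: r.map φ) := by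
    intro x y r hr
    have := hq x (y :: r) (by simp [hr])
    simpa using this
  have hmapRep : ∀ k : ℕ, (List.replicate k (1 : A)).map φ = List.replicate k (1 : B) := by
    intro k; rw [List.map_replicate, hφ1]
  have hφ0 : φ 0 = 0 := by
    have h1 : pStar (1 : A) (1 :: List.replicate m 1) = 0 := by
      rw [pStar_cons, show lieStar (1 : A) 1 = 0 by simp [lieStar], pStar_zero_left]
    have h2 : pStar (1 : B) (1 :: List.replicate m 1) = 0 := by
      rw [pStar_cons, show lieStar (1 : B) 1 = 0 by simp [lieStar], pStar_zero_left]
    have h := hP1' 1 1 (List.replicate m 1) (List.length_replicate (n := m) (a := (1 : A)))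
    rw [h1, hφ1, hmapRep] at h
    rw [h, h2]
  have skewLie : ∀ e w : A, star e = e → star (lieStar w e) = -(lieStar w e) := by
    intro e w he
    rw [lieStar, star_sub, star_mul, star_mul, he, star_star]; abel
  have saJor : ∀ e w : A, star e = e → star (jordanStar w e) = jordanStar w e := by
    intro e w he
    rw [jordanStar, star_add, star_mul, star_mul, he, star_star]; abel
  -- column additivity
  have alpha : ∀ u v : A, u * Pi = 0 → v * Pj = 0 → φ (u + v) = φ u + φ v := by
    intro u v huPi hvPj
    obtain ⟨t, ht⟩ := hbij.2 (φ u + φ v)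
    have hsuPi : Pi * star u = 0 := by
      have := congrArg star huPi; rwa [star_mul, hPiS, star_zero] at this
    have hvPi : v * Pi = v := by
      have h : v * (Pi + Pj) = v := by rw [hSum, mul_one]
      rwa [mul_add, hvPj, add_zero] at h
    have hsvPi : Pi * star v = star v := by
      have := congrArg star hvPi; rwa [star_mul, hPiS] at this
    have huPj : u * Pj = u := by
      have h : u * (Pi + Pj) = u := by rw [hSum, mul_one]
      rwa [mul_add, huPi, zero_add] at h
    have hsuPj : Pj * star u = star u := by
      have := congrArg star huPj; rwa [star_mul, hPjS] at this
    have hsvPj : Pj * star v = 0 := by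
      have := congrArg star hvPj; rwa [star_mul, hPjS, star_zero] at this
    have key : ∀ (e w k : A), star e = e → lieStar k e = 0 → jordanStar k e = 0 →
        φ t = φ k + φ w → t * e = w * e := by
      intro e w k he hk1 hk2 hφt
      have et : φ (pStar t (e :: List.replicate m 1)) =
          φ (pStar w (e :: List.replicate m 1)) := by
        rw [hP1' t e _ (List.length_replicate (n := m) (a := (1 : A))), hφt,
          hP1' w e _ (List.length_replicate (n := m) (a := (1 : A)))]
        rw [pStar_cons, lieStar_add_left, pStar_add_left]
        have h0 : pStar (lieStar (φ k) (φ e)) ((List.replicate m 1).map φ) = 0 := by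
          have h := hP1' k e _ (List.length_replicate (n := m) (a := (1 : A)))
          rw [pStar_cons, hk1, pStar_zero_left, hφ0] at h
          rw [pStar_cons] at h
          exact h.symm
        rw [h0, zero_add, pStar_cons]
      have etq : φ (qStar t (e :: List.replicate m 1)) =
          φ (qStar w (e :: List.replicate m 1)) := by
        rw [hQ1' t e _ (List.length_replicate (n := m) (a := (1 : A))), hφt,
          hQ1' w e _ (List.length_replicate (n := m) (a := (1 : A)))]
        rw [qStar_cons, jordanStar_add_left, qStar_add_left]
        have h0 : qStar (jordanStar (φ k) (φ e)) ((List.replicate m 1).map φ) = 0 := by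
          have h := hQ1' k e _ (List.length_replicate (n := m) (a := (1 : A)))
          rw [qStar_cons, hk2, qStar_zero_left, hφ0] at h
          rw [qStar_cons] at h
          exact h.symm
        rw [h0, zero_add, qStar_cons]
      have e1 : pStar t (e :: List.replicate m 1) = pStar w (e :: List.replicate m 1) :=
        hbij.1 et
      have e2 : qStar t (e :: List.replicate m 1) = qStar w (e :: List.replicate m 1) :=
        hbij.1 etq
      rw [pStar_cons, pStar_cons, pStar_skew_replicate m _ (skewLie e t he),
        pStar_skew_replicate m _ (skewLie e w he)] at e1
      rw [qStar_cons, qStar_cons, qStar_sa_replicate m _ (saJor e t he),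
        qStar_sa_replicate m _ (saJor e w he)] at e2
      have l1 : lieStar t e = lieStar w e := nsmul_pow_inj m _ _ e1
      have l2 : jordanStar t e = jordanStar w e := nsmul_pow_inj m _ _ e2
      have hsum2 : t * e + t * e = w * e + w * e := by
        have h := congrArg₂ (· + ·) l1 l2
        simp only [lieStar, jordanStar] at h
        calc t * e + t * e = (t * e - e * star t) + (t * e + e * star t) := by abel
        _ = (w * e - e * star w) + (w * e + e * star w) := h
        _ = w * e + w * e := by abel
      rw [← sub_eq_zero]
      apply two_nsmul_cancel (t * e - w * e)
      calc (t * e - w * e) + (t * e - w * e) = (t * e + t * e) - (w * e + w * e) := by abel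
      _ = 0 := by rw [hsum2, sub_self]
    have htPi : t * Pi = v * Pi :=
      key Pi v u hPiS (by simp [lieStar, huPi, hsuPi]) (by simp [jordanStar, huPi, hsuPi]) ht
    have htPj : t * Pj = u * Pj :=
      key Pj u v hPjS (by simp [lieStar, hvPj, hsvPj]) (by simp [jordanStar, hvPj, hsvPj])
        (by rw [ht, add_comm])
    have htuv : t = u + v := by
      have h : t * (Pi + Pj) = v * Pi + u * Pj := by rw [mul_add, htPi, htPj]
      rw [hSum, mul_one, hvPi, huPj] at h
      rw [h]; abel
    rw [← htuv, ht]
  -- ============ corner toolkits ============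
  have hA11 : ∀ z : A, Pi * z * Pi = z →
      z * Pi = z ∧ Pi * z = z ∧ z * Pj = 0 ∧ Pj * z = 0 ∧ Pi * star z * Pi = star z := by
    intro z hz
    have h1 : z * Pi = z := by
      conv_lhs => rw [← hz]
      rw [mul_assoc (Pi * z) Pi Pi, hPi2]
      exact hz
    have h2 : Pi * z = z := by
      conv_lhs => rw [← hz]
      rw [← mul_assoc Pi (Pi * z) Pi, ← mul_assoc Pi Pi z, hPi2]
      exact hz
    have h3 : z * Pj = 0 := by rw [hPjdef, mul_sub, mul_one, h1, sub_self]
    have h4 : Pj * z = 0 := by rw [hPjdef, sub_mul, one_mul, h2, sub_self]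
    have h5 : Pi * star z * Pi = star z := by
      have h := congrArg star hz
      rw [star_mul, star_mul, hPiS] at h
      rw [mul_assoc]; exact h
    exact ⟨h1, h2, h3, h4, h5⟩
  have hA11PjKill : ∀ z : A, Pi * z * Pi = z → lieStar z Pj = 0 ∧ jordanStar z Pj = 0 := by
    intro z hz
    obtain ⟨h1, h2, h3, h4, h5⟩ := hA11 z hz
    obtain ⟨_, _, _, h4', _⟩ := hA11 (star z) h5
    exact ⟨by simp [lieStar, h3, h4'], by simp [jordanStar, h3, h4']⟩
  have hA11PjKill' : ∀ z : A, Pi * z * Pi = z → lieStar Pj z = 0 ∧ jordanStar Pj z = 0 := by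
    intro z hz
    obtain ⟨h1, h2, h3, h4, h5⟩ := hA11 z hz
    exact ⟨by simp [lieStar, hPjS, h3, h4], by simp [jordanStar, hPjS, h3, h4]⟩
  -- ============ step B : T lies in the (i,i) corner ============
  obtain ⟨T, hT⟩ := hbij.2 (φ a + φ b)
  have keyzero : ∀ (e : A), star e = e →
      lieStar a e = 0 → jordanStar a e = 0 → lieStar b e = 0 → jordanStar b e = 0 →
      lieStar T e = 0 ∧ jordanStar T e = 0 := by
    intro e he ha1 ha2 hb1 hb2
    have h0 : ∀ w : A, lieStar w e = 0 →
        pStar (lieStar (φ w) (φ e)) ((List.replicate m 1).map φ) = 0 := by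
      intro w hw
      have h := hP1' w e _ (List.length_replicate (n := m) (a := (1 : A)))
      rw [pStar_cons, hw, pStar_zero_left, hφ0] at h
      rw [pStar_cons] at h; exact h.symm
    have h0q : ∀ w : A, jordanStar w e = 0 →
        qStar (jordanStar (φ w) (φ e)) ((List.replicate m 1).map φ) = 0 := by
      intro w hw
      have h := hQ1' w e _ (List.length_replicate (n := m) (a := (1 : A)))
      rw [qStar_cons, hw, qStar_zero_left, hφ0] at h
      rw [qStar_cons] at h; exact h.symm
    have et : φ (pStar T (e :: List.replicate m 1)) = 0 := by
      rw [hP1' T e _ (List.length_replicate (n := m) (a := (1 : A))), hT, pStar_cons, lieStar_add_left,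
        pStar_add_left, h0 a ha1, h0 b hb1, add_zero]
    have etq : φ (qStar T (e :: List.replicate m 1)) = 0 := by
      rw [hQ1' T e _ (List.length_replicate (n := m) (a := (1 : A))), hT, qStar_cons, jordanStar_add_left,
        qStar_add_left, h0q a ha2, h0q b hb2, add_zero]
    have e1 : pStar T (e :: List.replicate m 1) = 0 := hbij.1 (by rw [et, hφ0])
    have e2 : qStar T (e :: List.replicate m 1) = 0 := hbij.1 (by rw [etq, hφ0])
    rw [pStar_cons, pStar_skew_replicate m _ (skewLie e T he)] at e1
    rw [qStar_cons, qStar_sa_replicate m _ (saJor e T he)] at e2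
    exact ⟨nsmul_pow_cancel m _ e1, nsmul_pow_cancel m _ e2⟩
  have hTPj : T * Pj = 0 := by
    obtain ⟨hTl, hTq⟩ := keyzero Pj hPjS (hA11PjKill a ha).1 (hA11PjKill a ha).2
      (hA11PjKill b hb).1 (hA11PjKill b hb).2
    apply two_nsmul_cancel
    calc T * Pj + T * Pj = (T * Pj - Pj * star T) + (T * Pj + Pj * star T) := by abel
    _ = lieStar T Pj + jordanStar T Pj := rfl
    _ = 0 := by rw [hTl, hTq, add_zero]
  have hPjT : Pj * T = 0 := by
    have h0 : ∀ w : A, lieStar Pj w = 0 →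
        pStar (lieStar (φ Pj) (φ w)) ((List.replicate m 1).map φ) = 0 := by
      intro w hw
      have h := hP1' Pj w _ (List.length_replicate (n := m) (a := (1 : A)))
      rw [pStar_cons, hw, pStar_zero_left, hφ0] at h
      rw [pStar_cons] at h; exact h.symm
    have h0q : ∀ w : A, jordanStar Pj w = 0 →
        qStar (jordanStar (φ Pj) (φ w)) ((List.replicate m 1).map φ) = 0 := by
      intro w hw
      have h := hQ1' Pj w _ (List.length_replicate (n := m) (a := (1 : A)))
      rw [qStar_cons, hw, qStar_zero_left, hφ0] at h
      rw [qStar_cons] at h; exact h.symm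
    have et : φ (pStar Pj (T :: List.replicate m 1)) = 0 := by
      rw [hP1' Pj T _ (List.length_replicate (n := m) (a := (1 : A))), hT, pStar_cons, lieStar_add_right,
        pStar_add_left, h0 a (hA11PjKill' a ha).1, h0 b (hA11PjKill' b hb).1, add_zero]
    have etq : φ (qStar Pj (T :: List.replicate m 1)) = 0 := by
      rw [hQ1' Pj T _ (List.length_replicate (n := m) (a := (1 : A))), hT, qStar_cons, jordanStar_add_right,
        qStar_add_left, h0q a (hA11PjKill' a ha).2, h0q b (hA11PjKill' b hb).2, add_zero]
    have e1 : pStar Pj (T :: List.replicate m 1) = 0 := hbij.1 (by rw [et, hφ0])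
    have e2 : qStar Pj (T :: List.replicate m 1) = 0 := hbij.1 (by rw [etq, hφ0])
    rw [pStar_cons] at e1
    rw [qStar_cons] at e2
    have hw : lieStar Pj T = Pj * T := by rw [lieStar, hPjS, hTPj, sub_zero]
    have hw' : jordanStar Pj T = Pj * T := by rw [jordanStar, hPjS, hTPj, add_zero]
    rw [hw] at e1; rw [hw'] at e2
    exact pq_replicate_zero m _ e1 e2
  have hTPi : T * Pi = T := by
    have h : T * (Pi + Pj) = T := by rw [hSum, mul_one]
    rwa [mul_add, hTPj, add_zero] at h
  have hPiT : Pi * T = T := by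
    have h : (Pi + Pj) * T = T := by rw [hSum, one_mul]
    rwa [add_mul, hPjT, add_zero] at h
  have hT11 : Pi * T * Pi = T := by rw [hPiT, hTPi]
  have hab11 : Pi * (a + b) * Pi = a + b := by rw [mul_add, add_mul, ha, hb]
  -- ============ A12 toolkit ============
  have hA12 : ∀ u : A, Pi * u * Pj = u →
      Pi * u = u ∧ u * Pj = u ∧ u * Pi = 0 ∧ Pj * u = 0 ∧
      star u * Pi = star u ∧ Pi * star u = 0 ∧ star u * Pj = 0 ∧ Pj * star u = star u := by
    intro u hu
    have h1 : Pi * u = u := by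
      conv_lhs => rw [← hu]
      rw [← mul_assoc Pi (Pi * u) Pj, ← mul_assoc Pi Pi u, hPi2]
      exact hu
    have h2 : u * Pj = u := by
      conv_lhs => rw [← hu]
      rw [mul_assoc (Pi * u) Pj Pj, hPj2]
      exact hu
    have h3 : u * Pi = 0 := by
      conv_lhs => rw [← hu]
      rw [mul_assoc (Pi * u) Pj Pi, hPjPi, mul_zero]
    have h4 : Pj * u = 0 := by
      conv_lhs => rw [← hu]
      rw [← mul_assoc Pj (Pi * u) Pj, ← mul_assoc Pj Pi u, hPjPi, zero_mul, zero_mul]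
    have hsu : Pj * star u * Pi = star u := by
      have h := congrArg star hu
      rw [star_mul, star_mul, hPiS, hPjS, ← mul_assoc] at h
      exact h
    have s1 : star u * Pi = star u := by
      conv_lhs => rw [← hsu]
      rw [mul_assoc (Pj * star u) Pi Pi, hPi2]
      exact hsu
    have s2 : Pi * star u = 0 := by
      conv_lhs => rw [← hsu]
      rw [← mul_assoc Pi (Pj * star u) Pi, ← mul_assoc Pi Pj (star u), hPiPj, zero_mul, zero_mul]
    have s3 : star u * Pj = 0 := by
      conv_lhs => rw [← hsu]
      rw [mul_assoc (Pj * star u) Pi Pj, hPiPj, mul_zero]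
    have s4 : Pj * star u = star u := by
      conv_lhs => rw [← hsu]
      rw [← mul_assoc Pj (Pj * star u) Pi, ← mul_assoc Pj Pj (star u), hPj2]
      exact hsu
    exact ⟨h1, h2, h3, h4, s1, s2, s3, s4⟩
  -- ============ step C : s * A12 = 0 ============
  have hsC : ∀ c : A, T * (Pi * c * Pj) = (a + b) * (Pi * c * Pj) := by
    intro c
    have hCPj : (Pi * c * Pj) * Pj = Pi * c * Pj := by rw [mul_assoc, hPj2]
    have memMul : ∀ z : A, Pi * z * Pi = z → Pi * (z * (Pi * c * Pj)) * Pj = z * (Pi * c * Pj) := by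
      intro z hz
      obtain ⟨hz1, hz2, _, _, _⟩ := hA11 z hz
      rw [← mul_assoc Pi z (Pi * c * Pj), hz2, mul_assoc z (Pi * c * Pj) Pj, hCPj]
    have lieMul : ∀ z : A, Pi * z * Pi = z → lieStar z (Pi * c * Pj) = z * (Pi * c * Pj) := by
      intro z hz
      obtain ⟨_, _, _, _, h5⟩ := hA11 z hz
      obtain ⟨_, _, _, hPjsz, _⟩ := hA11 (star z) h5
      have hCz : (Pi * c * Pj) * star z = 0 := by
        rw [mul_assoc (Pi * c) Pj (star z), hPjsz, mul_zero]
      rw [lieStar, hCz, sub_zero]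
    cases m with
    | zero =>
      -- n = 2 : binary preservation
      have hbin : ∀ x y : A, φ (lieStar x y) = lieStar (φ x) (φ y) := by
        intro x y
        have h := hP1' x y [] rfl
        simpa [pStar_cons, pStar_nil] using h
      have beta : ∀ u v : A, Pi * u * Pj = u → Pi * v * Pj = v →
          φ (u + v) = φ u + φ v := by
        intro u v hu hv
        obtain ⟨hu1, hu2, hu3, hu4, hsu1, hsu2, hsu3, hsu4⟩ := hA12 u hu
        obtain ⟨hv1, hv2, hv3, hv4, hsv1, hsv2, hsv3, hsv4⟩ := hA12 v hv
        have huv : u * v = 0 := by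
          conv_lhs => rw [← hv1]
          rw [← mul_assoc, hu3, zero_mul]
        have hvsu_Pj : (v * star u) * Pj = 0 := by rw [mul_assoc, hsu3, mul_zero]
        have e1 : (Pi + u) * (Pj + v) = u + v := by
          rw [add_mul, mul_add, mul_add, hPiPj, hv1, hu2, huv]; abel
        have e2 : (Pj + v) * star (Pi + u) = star u + v * star u := by
          rw [star_add, hPiS, mul_add, add_mul, add_mul, hPjPi, hv3, hsu4]; abel
        have hg : lieStar (Pi + u) (Pj + v) = (u + v) + -(star u + v * star u) := by
          rw [lieStar, e1, e2]; abel
        have e3 : u * (Pj + v) = u := by rw [mul_add, hu2, huv, add_zero]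
        have e4 : (Pj + v) * star u = star u + v * star u := by rw [add_mul, hsu4]
        have hh : lieStar u (Pj + v) = u + -(star u + v * star u) := by
          rw [lieStar, e3, e4]; abel
        have hv' : lieStar Pi (Pj + v) = v := by
          rw [lieStar, hPiS, mul_add, hPiPj, hv1, add_mul, hPjPi, hv3]; abel
        have hφPiu : φ (Pi + u) = φ u + φ Pi := by
          rw [show Pi + u = u + Pi from add_comm _ _]
          exact alpha u Pi hu3 hPiPj
        have hB : φ (lieStar (Pi + u) (Pj + v)) =
            φ (lieStar u (Pj + v)) + φ (lieStar Pi (Pj + v)) := by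
          rw [hbin, hφPiu, lieStar_add_left, hbin, hbin]
        rw [hg, hh, hv'] at hB
        have hker : (-(star u + v * star u)) * Pj = 0 := by
          rw [neg_mul, add_mul, hsu3, hvsu_Pj, add_zero, neg_zero]
        have l1 : φ ((u + v) + -(star u + v * star u)) =
            φ (u + v) + φ (-(star u + v * star u)) := by
          apply alpha
          · rw [add_mul, hu3, hv3, add_zero]
          · exact hker
        have l2 : φ (u + -(star u + v * star u)) =
            φ u + φ (-(star u + v * star u)) := by
          apply alpha
          · exact hu3
          · exact hker
        rw [l1, l2] at hB
        have hB' : φ (u + v) + φ (-(star u + v * star u)) =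
            (φ u + φ v) + φ (-(star u + v * star u)) := by
          rw [hB]; abel
        exact add_right_cancel hB'
      have h1 : φ (lieStar T (Pi * c * Pj)) = φ (lieStar (a + b) (Pi * c * Pj)) := by
        rw [hbin, hT, lieStar_add_left, ← hbin, ← hbin]
        rw [lieMul a ha, lieMul b hb, lieMul (a + b) hab11]
        rw [← beta _ _ (memMul a ha) (memMul b hb), ← add_mul]
      have h2 := hbij.1 h1
      rw [lieMul T hT11, lieMul (a + b) hab11] at h2
      exact h2
    | succ k =>
      have raw : ∀ u v : A, Pi * u * Pj = u → Pi * v * Pj = v →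
          φ ((2 ^ k : ℕ) • ((u + v) - star (u + v))) =
            φ ((2 ^ k : ℕ) • (u - star u)) + φ ((2 ^ k : ℕ) • (v - star v)) := by
        intro u v hu hv
        obtain ⟨hu1, hu2, hu3, hu4, hsu1, hsu2, hsu3, hsu4⟩ := hA12 u hu
        obtain ⟨hv1, hv2, hv3, hv4, hsv1, hsv2, hsv3, hsv4⟩ := hA12 v hv
        have huv : u * v = 0 := by
          conv_lhs => rw [← hv1]
          rw [← mul_assoc, hu3, zero_mul]
        have hvsu_Pj : (v * star u) * Pj = 0 := by rw [mul_assoc, hsu3, mul_zero]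
        have hPj_usv : Pj * (u * star v) = 0 := by rw [← mul_assoc, hu4, zero_mul]
        have e1 : (Pi + u) * (Pj + v) = u + v := by
          rw [add_mul, mul_add, mul_add, hPiPj, hv1, hu2, huv]; abel
        have e2 : (Pj + v) * star (Pi + u) = star u + v * star u := by
          rw [star_add, hPiS, mul_add, add_mul, add_mul, hPjPi, hv3, hsu4]; abel
        have hg : lieStar (Pi + u) (Pj + v) = (u + v) - (star u + v * star u) := by
          rw [lieStar, e1, e2]
        have hstep2 : ∀ w : A, w * Pj = w →
            lieStar ((w + 0) - (star u + v * star u)) Pj = 0 → True := fun _ _ _ => trivial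
        have hg2 : lieStar ((u + v) - (star u + v * star u)) Pj = (u + v) - star (u + v) := by
          have hx1 : ((u + v) - (star u + v * star u)) * Pj = u + v := by
            rw [sub_mul, add_mul, add_mul, hu2, hv2, hsu3, hvsu_Pj, add_zero, sub_zero]
          have hx2 : Pj * star ((u + v) - (star u + v * star u)) = star (u + v) := by
            rw [star_sub, star_add, star_add, star_mul, star_star, mul_sub, mul_add, mul_add,
              hsu4, hsv4, hu4, hPj_usv, add_zero, sub_zero, ← star_add]
          rw [lieStar, hx1, hx2]
        have wordPiu : pStar (Pi + u) ((Pj + v) :: Pj :: List.replicate k 1)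
            = (2 ^ k : ℕ) • ((u + v) - star (u + v)) := by
          rw [pStar_cons, hg, pStar_cons, hg2]
          exact pStar_skew_replicate k _ (by rw [star_sub, star_star]; abel)
        have wordPi : pStar Pi ((Pj + v) :: Pj :: List.replicate k 1)
            = (2 ^ k : ℕ) • (v - star v) := by
          have hx : lieStar Pi (Pj + v) = v := by
            rw [lieStar, hPiS, mul_add, hPiPj, hv1, add_mul, hPjPi, hv3]; abel
          have hx2 : lieStar v Pj = v - star v := by rw [lieStar, hv2, hsv4]
          rw [pStar_cons, hx, pStar_cons, hx2]
          exact pStar_skew_replicate k _ (by rw [star_sub, star_star]; abel)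
        have wordu : pStar u ((Pj + v) :: Pj :: List.replicate k 1)
            = (2 ^ k : ℕ) • (u - star u) := by
          have e3 : u * (Pj + v) = u := by rw [mul_add, hu2, huv, add_zero]
          have e4 : (Pj + v) * star u = star u + v * star u := by rw [add_mul, hsu4]
          have hh : lieStar u (Pj + v) = (u + 0) - (star u + v * star u) := by
            rw [lieStar, e3, e4, add_zero]
          have hh2 : lieStar ((u + 0) - (star u + v * star u)) Pj = u - star u := by
            have hx1 : ((u + 0) - (star u + v * star u)) * Pj = u := by
              rw [sub_mul, add_mul, add_mul, hu2, hsu3, hvsu_Pj, zero_mul]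
              abel
            have hx2 : Pj * star ((u + 0) - (star u + v * star u)) = star u := by
              rw [star_sub, star_add, star_add, star_mul, star_star, mul_sub, mul_add, mul_add,
                hsu4, hu4, hPj_usv, star_zero, mul_zero]
              abel
            rw [lieStar, hx1, hx2]
          rw [pStar_cons, hh, pStar_cons, hh2]
          exact pStar_skew_replicate k _ (by rw [star_sub, star_star]; abel)
        have hφPiu : φ (Pi + u) = φ u + φ Pi := by
          rw [show Pi + u = u + Pi from add_comm _ _]
          exact alpha u Pi hu3 hPiPj
        have hB := hP1' (Pi + u) (Pj + v) (Pj :: List.replicate k 1) (by simp)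
        rw [wordPiu, hφPiu, pStar_cons, lieStar_add_left, pStar_add_left] at hB
        have hBu := hP1' u (Pj + v) (Pj :: List.replicate k 1) (by simp)
        rw [wordu, pStar_cons] at hBu
        have hBPi := hP1' Pi (Pj + v) (Pj :: List.replicate k 1) (by simp)
        rw [wordPi, pStar_cons] at hBPi
        rw [← hBu, ← hBPi] at hB
        exact hB
      -- apply raw with u = a*C, v = b*C
      have ida : ∀ z : A, Pi * z * Pi = z →
          pStar (lieStar (φ z) (φ (Pi * c * Pj))) ((List.replicate (k + 1) 1).map φ)
            = φ ((2 ^ k : ℕ) • (z * (Pi * c * Pj) - star (z * (Pi * c * Pj)))) := by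
        intro z hz
        have h : φ (pStar z ((Pi * c * Pj) :: List.replicate (k + 1) 1))
            = pStar (lieStar (φ z) (φ (Pi * c * Pj))) ((List.replicate (k + 1) 1).map φ) :=
          hP1' z (Pi * c * Pj) _ (List.length_replicate (n := (k + 1)) (a := (1 : A)))
        rw [← h, pStar_cons, lieMul z hz, pStar_one_replicate]
      have eq1 : pStar T ((Pi * c * Pj) :: List.replicate (k + 1) 1)
          = pStar (a + b) ((Pi * c * Pj) :: List.replicate (k + 1) 1) := by
        apply hbij.1
        have h1 : φ (pStar T ((Pi * c * Pj) :: List.replicate (k + 1) 1))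
            = pStar (lieStar (φ a + φ b) (φ (Pi * c * Pj))) ((List.replicate (k + 1) 1).map φ) := by
          have h := hP1' T (Pi * c * Pj) _ (List.length_replicate (n := (k + 1)) (a := (1 : A)))
          rw [hT] at h; exact h
        have h2 : φ (pStar (a + b) ((Pi * c * Pj) :: List.replicate (k + 1) 1))
            = φ ((2 ^ k : ℕ) • ((a + b) * (Pi * c * Pj) - star ((a + b) * (Pi * c * Pj)))) := by
          rw [pStar_cons, lieMul (a + b) hab11, pStar_one_replicate]
        rw [h1, h2, lieStar_add_left, pStar_add_left, ida a ha, ida b hb,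
          ← raw _ _ (memMul a ha) (memMul b hb), add_mul]
      rw [pStar_cons, pStar_cons, lieMul T hT11, lieMul (a + b) hab11,
        pStar_one_replicate, pStar_one_replicate] at eq1
      have eq2 : T * (Pi * c * Pj) - star (T * (Pi * c * Pj))
          = (a + b) * (Pi * c * Pj) - star ((a + b) * (Pi * c * Pj)) :=
        nsmul_pow_inj k _ _ eq1
      have hmemD : Pi * (T * (Pi * c * Pj) - (a + b) * (Pi * c * Pj)) * Pj
          = T * (Pi * c * Pj) - (a + b) * (Pi * c * Pj) := by
        rw [mul_sub, sub_mul, memMul T hT11, memMul (a + b) hab11]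
      obtain ⟨_, _, _, _, _, hs2, _, _⟩ := hA12 _ hmemD
      have heq : T * (Pi * c * Pj) - (a + b) * (Pi * c * Pj)
          = star (T * (Pi * c * Pj) - (a + b) * (Pi * c * Pj)) := by
        rw [star_sub]
        calc T * (Pi * c * Pj) - (a + b) * (Pi * c * Pj)
            = (T * (Pi * c * Pj) - star (T * (Pi * c * Pj)))
              - ((a + b) * (Pi * c * Pj) - star ((a + b) * (Pi * c * Pj)))
              + (star (T * (Pi * c * Pj)) - star ((a + b) * (Pi * c * Pj))) := by abel
          _ = star (T * (Pi * c * Pj)) - star ((a + b) * (Pi * c * Pj)) := by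
              rw [eq2]; abel
      have hzero : T * (Pi * c * Pj) - (a + b) * (Pi * c * Pj) = 0 := by
        conv_lhs => rw [← hmemD, heq]
        rw [hs2, zero_mul]
      exact sub_eq_zero.mp hzero

  -- ============ endgame ============
  have hsA11 : Pi * (T - (a + b)) * Pi = T - (a + b) := by
    rw [mul_sub, sub_mul, hT11, hab11]
  have hstarsmem : Pi * star (T - (a + b)) * Pi = star (T - (a + b)) :=
    (hA11 _ hsA11).2.2.2.2
  have hA11mul : ∀ z w : A, Pi * z * Pi = z → Pi * w * Pi = w → Pi * (z * w) * Pi = z * w := by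
    intro z w hz hw
    obtain ⟨-, hz2, -, -, -⟩ := hA11 z hz
    obtain ⟨hw1, -, -, -, -⟩ := hA11 w hw
    calc Pi * (z * w) * Pi = ((Pi * z) * w) * Pi := by rw [mul_assoc Pi z w]
    _ = (z * w) * Pi := by rw [hz2]
    _ = z * (w * Pi) := by rw [mul_assoc]
    _ = z * w := by rw [hw1]
  have hA11sub : ∀ z w : A, Pi * z * Pi = z → Pi * w * Pi = w → Pi * (z - w) * Pi = z - w := by
    intro z w hz hw; rw [mul_sub, sub_mul, hz, hw]
  have hA11add : ∀ z w : A, Pi * z * Pi = z → Pi * w * Pi = w → Pi * (z + w) * Pi = z + w := by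
    intro z w hz hw; rw [mul_add, add_mul, hz, hw]
  have hmidmem : ∀ d : A, Pi * (Pi * d * Pi) * Pi = Pi * d * Pi := by
    intro d
    calc Pi * (Pi * d * Pi) * Pi = ((Pi * Pi) * d * Pi) * Pi := by
          rw [← mul_assoc Pi (Pi * d) Pi, ← mul_assoc Pi Pi d]
    _ = (Pi * d * Pi) * Pi := by rw [hPi2]
    _ = Pi * d * (Pi * Pi) := by rw [mul_assoc (Pi * d) Pi Pi]
    _ = Pi * d * Pi := by rw [hPi2]
  -- s * d = s * (Pi d Pi), d * star s = (Pi d Pi) * star s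
  have hsd1 : ∀ d : A, (T - (a + b)) * d = (T - (a + b)) * (Pi * d * Pi) := by
    intro d
    have hsPi : (T - (a + b)) * Pi = T - (a + b) := (hA11 _ hsA11).1
    have hsPj0 : (T - (a + b)) * (Pi * d * Pj) = 0 := by rw [sub_mul, hsC d, sub_self]
    calc (T - (a + b)) * d = (T - (a + b)) * (Pi * d) := by
          conv_lhs => rw [← hsPi]
          rw [mul_assoc]
    _ = (T - (a + b)) * (Pi * d * Pi) + (T - (a + b)) * (Pi * d * Pj) := by
          rw [← mul_add, ← mul_add (Pi * d) Pi Pj, hSum, mul_one]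
    _ = (T - (a + b)) * (Pi * d * Pi) := by rw [hsPj0, add_zero]
  have hsd2 : ∀ d : A, d * star (T - (a + b)) = (Pi * d * Pi) * star (T - (a + b)) := by
    intro d
    have hPis : Pi * star (T - (a + b)) = star (T - (a + b)) := (hA11 _ hstarsmem).2.1
    have hs21 : (Pj * d * Pi) * star (T - (a + b)) = 0 := by
      have hx : (T - (a + b)) * (Pi * star d * Pj) = 0 := by
        rw [sub_mul, hsC (star d), sub_self]
      have h3 := congrArg star hx
      rw [star_mul, star_mul, star_mul, hPiS, hPjS, star_star, star_zero,
        ← mul_assoc] at h3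
      exact h3
    calc d * star (T - (a + b)) = (d * Pi) * star (T - (a + b)) := by
          conv_lhs => rw [← hPis]
          rw [← mul_assoc]
    _ = (Pi * d * Pi + Pj * d * Pi) * star (T - (a + b)) := by
          rw [show d * Pi = Pi * d * Pi + Pj * d * Pi from by
            rw [← add_mul, ← add_mul, hSum, one_mul]]
    _ = (Pi * d * Pi) * star (T - (a + b)) := by rw [add_mul, hs21, add_zero]
  have hsliemem : ∀ d : A, Pi * (lieStar (T - (a + b)) d) * Pi = lieStar (T - (a + b)) d := by
    intro d
    rw [lieStar, hsd1 d, hsd2 d]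
    exact hA11sub _ _ (hA11mul _ _ hsA11 (hmidmem d)) (hA11mul _ _ (hmidmem d) hstarsmem)
  have hsjormem : ∀ d : A, Pi * (jordanStar (T - (a + b)) d) * Pi = jordanStar (T - (a + b)) d := by
    intro d
    rw [jordanStar, hsd1 d, hsd2 d]
    exact hA11add _ _ (hA11mul _ _ hsA11 (hmidmem d)) (hA11mul _ _ (hmidmem d) hstarsmem)
  have A11repP : ∀ j : ℕ, ∀ z : A, Pi * z * Pi = z →
      Pi * (pStar z (List.replicate j 1)) * Pi = pStar z (List.replicate j 1) := by
    intro j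
    induction j with
    | zero => intro z hz; simpa [pStar_nil] using hz
    | succ j ih =>
        intro z hz
        rw [List.replicate_succ, pStar_cons, lieStar_one]
        exact ih _ (hA11sub _ _ hz (hA11 z hz).2.2.2.2)
  have A11repQ : ∀ j : ℕ, ∀ z : A, Pi * z * Pi = z →
      Pi * (qStar z (List.replicate j 1)) * Pi = qStar z (List.replicate j 1) := by
    intro j
    induction j with
    | zero => intro z hz; simpa [qStar_nil] using hz
    | succ j ih =>
        intro z hz
        rw [List.replicate_succ, qStar_cons, jordanStar_one]
        exact ih _ (hA11add _ _ hz (hA11 z hz).2.2.2.2)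
  -- slot-2 kills (A side)
  have hsz : ∀ x : A, Pi * x * Pi = x → ∀ r : List A,
      pStar Pj (x :: r) = 0 ∧ qStar Pj (x :: r) = 0 := by
    intro x hx r
    obtain ⟨hl, hq'⟩ := hA11PjKill' x hx
    exact ⟨by rw [pStar_cons, hl, pStar_zero_left],
      by rw [qStar_cons, hq', qStar_zero_left]⟩
  rw [← sub_eq_zero]
  cases m with
  | zero =>
    -- n = 2
    have hbin : ∀ x y : A, φ (lieStar x y) = lieStar (φ x) (φ y) := by
      intro x y
      have h := hP1' x y [] rfl
      simpa [pStar_cons, pStar_nil] using h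
    have hbinq : ∀ x y : A, φ (jordanStar x y) = jordanStar (φ x) (φ y) := by
      intro x y
      have h := hQ1' x y [] rfl
      simpa [qStar_cons, qStar_nil] using h
    have hTc : ∀ c : A, Pi * c * Pi = 0 → T * c = (a + b) * c := by
      intro c hc
      have key : ∀ z : A, Pi * z * Pi = z → z * c = z * (Pi * c * Pj) := by
        intro z hz
        obtain ⟨hz1, -, -, -, -⟩ := hA11 z hz
        calc z * c = z * (Pi * c) := by
              conv_lhs => rw [← hz1]
              rw [mul_assoc]
        _ = z * (Pi * c * Pi) + z * (Pi * c * Pj) := by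
              rw [← mul_add, ← mul_add (Pi * c) Pi Pj, hSum, mul_one]
        _ = z * (Pi * c * Pj) := by rw [hc, mul_zero, zero_add]
      rw [key T hT11, key (a + b) hab11, hsC c]
    have hcT : ∀ c : A, Pi * c * Pi = 0 → c * star T = c * star (a + b) := by
      intro c hc
      have key : ∀ z : A, Pi * z * Pi = z → c * star z = (Pj * c * Pi) * star z := by
        intro z hz
        have h5 := (hA11 z hz).2.2.2.2
        have hsz2 : Pi * star z = star z := (hA11 (star z) h5).2.1
        calc c * star z = (c * Pi) * star z := by
              conv_lhs => rw [← hsz2]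
              rw [← mul_assoc]
        _ = (Pi * c * Pi + Pj * c * Pi) * star z := by
              rw [show c * Pi = Pi * c * Pi + Pj * c * Pi from by
                rw [← add_mul, ← add_mul, hSum, one_mul]]
        _ = (Pj * c * Pi) * star z := by rw [add_mul, hc, zero_mul, zero_add]
      have hs21 : (Pj * c * Pi) * star (T - (a + b)) = 0 := by
        have hx : (T - (a + b)) * (Pi * star c * Pj) = 0 := by
          rw [sub_mul, hsC (star c), sub_self]
        have h3 := congrArg star hx
        rw [star_mul, star_mul, star_mul, hPiS, hPjS, star_star, star_zero,
          ← mul_assoc] at h3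
        exact h3
      have h4 : (Pj * c * Pi) * star T = (Pj * c * Pi) * star (a + b) := by
        rw [star_sub, mul_sub, sub_eq_zero] at hs21
        exact hs21
      rw [key T hT11, key (a + b) hab11, h4]
    have hXkill : ∀ c : A, Pi * c * Pi = 0 → (φ (a + b) - (φ a + φ b)) * φ c = 0 := by
      intro c hc
      have hl : lieStar T c = lieStar (a + b) c := by
        rw [lieStar, lieStar, hTc c hc, hcT c hc]
      have hj : jordanStar T c = jordanStar (a + b) c := by
        rw [jordanStar, jordanStar, hTc c hc, hcT c hc]
      have h1 : lieStar (φ (a + b) - (φ a + φ b)) (φ c) = 0 := by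
        rw [← hT, lieStar_sub_left', ← hbin, ← hbin, hl, sub_self]
      have h2 : jordanStar (φ (a + b) - (φ a + φ b)) (φ c) = 0 := by
        rw [← hT, jordanStar_sub_left', ← hbinq, ← hbinq, hj, sub_self]
      apply two_nsmul_cancel
      calc (φ (a + b) - (φ a + φ b)) * φ c + (φ (a + b) - (φ a + φ b)) * φ c
          = lieStar (φ (a + b) - (φ a + φ b)) (φ c)
            + jordanStar (φ (a + b) - (φ a + φ b)) (φ c) := by
            rw [lieStar, jordanStar]; abel
      _ = 0 := by rw [h1, h2, add_zero]
    apply hdagj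
    intro Z
    obtain ⟨d, rfl⟩ := hbij.2 Z
    have hgmem : Pi * (jordanStar d Pj) * Pi = 0 := by
      rw [jordanStar, mul_add, add_mul]
      rw [show Pi * (d * Pj) * Pi = Pi * d * (Pj * Pi) from by
        rw [← mul_assoc, mul_assoc (Pi * d) Pj Pi]]
      rw [show Pi * (Pj * star d) * Pi = (Pi * Pj) * star d * Pi from by
        rw [← mul_assoc]]
      rw [hPjPi, hPiPj, mul_zero, zero_mul, zero_mul, add_zero]
    have hlmem : Pi * (lieStar d Pj) * Pi = 0 := by
      rw [lieStar, mul_sub, sub_mul]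
      rw [show Pi * (d * Pj) * Pi = Pi * d * (Pj * Pi) from by
        rw [← mul_assoc, mul_assoc (Pi * d) Pj Pi]]
      rw [show Pi * (Pj * star d) * Pi = (Pi * Pj) * star d * Pi from by
        rw [← mul_assoc]]
      rw [hPjPi, hPiPj, mul_zero, zero_mul, zero_mul, sub_zero]
    have h1 := hXkill _ hgmem
    have h2 := hXkill _ hlmem
    rw [hbinq d Pj] at h1
    rw [hbin d Pj] at h2
    have h3 : (φ (a + b) - (φ a + φ b)) * (φ d * φ Pj)
        + (φ (a + b) - (φ a + φ b)) * (φ d * φ Pj) = 0 := by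
      calc (φ (a + b) - (φ a + φ b)) * (φ d * φ Pj)
            + (φ (a + b) - (φ a + φ b)) * (φ d * φ Pj)
          = (φ (a + b) - (φ a + φ b)) * (jordanStar (φ d) (φ Pj))
            + (φ (a + b) - (φ a + φ b)) * (lieStar (φ d) (φ Pj)) := by
            rw [jordanStar, lieStar, mul_add, mul_sub]; abel
      _ = 0 := by rw [h1, h2, add_zero]
    have h4 := two_nsmul_cancel _ h3
    rw [← mul_assoc] at h4
    exact h4
  | succ k =>
    obtain ⟨X, hXd⟩ : ∃ X : B, X = φ (a + b) - (φ a + φ b) := ⟨_, rfl⟩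
    rw [← hXd]
    have symLie : ∀ G W : B, lieStar G W - star (lieStar G W)
        = G * (W + star W) - (W + star W) * star G := by
      intro G W
      rw [lieStar, star_sub, star_mul, star_mul, star_star, mul_add, add_mul]
      abel
    have symJor : ∀ G W : B, jordanStar G W + star (jordanStar G W)
        = G * (W + star W) + (W + star W) * star G := by
      intro G W
      rw [jordanStar, star_add, star_mul, star_mul, star_star, mul_add, add_mul]
      abel
    have hhalf : ∀ H : B, star H = H → ∃ d : A, φ d + star (φ d) = H := by
      intro H hH
      obtain ⟨d, hd⟩ := hbij.2 ((1 / 2 : ℂ) • H)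
      refine ⟨d, ?_⟩
      rw [hd, star_smul, hH, (show star (1 / 2 : ℂ) = (1 / 2 : ℂ) by simp), ← add_smul]
      norm_num
    -- ===== slot-1 family =====
    have hswordP : ∀ d : A, pStar (T - (a + b)) (d :: (List.replicate k 1 ++ [Pj])) = 0 := by
      intro d
      rw [pStar_cons, pStar_append]
      exact (hA11PjKill _ (A11repP k _ (hsliemem d))).1
    have hswordQ : ∀ d : A, qStar (T - (a + b)) (d :: (List.replicate k 1 ++ [Pj])) = 0 := by
      intro d
      rw [qStar_cons, qStar_append]
      exact (hA11PjKill _ (A11repQ k _ (hsjormem d))).2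
    have hmapK : ∀ d : A, (d :: (List.replicate k (1 : A) ++ [Pj])).map φ
        = φ d :: (List.replicate k (1 : B) ++ [φ Pj]) := by
      intro d; simp [hφ1]
    have hlenK : ∀ d : A, (d :: (List.replicate k (1 : A) ++ [Pj])).length = (k + 1 + 2) - 1 := by
      intro d; simp
    have hXKp : ∀ d : A,
        pStar X (φ d :: (List.replicate k (1 : B) ++ [φ Pj])) = 0 := by
      intro d
      have h1 := hp T _ (hlenK d)
      have h2 := hp (a + b) _ (hlenK d)
      rw [hmapK d] at h1 h2
      have hA : pStar T (d :: (List.replicate k 1 ++ [Pj]))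
          = pStar (a + b) (d :: (List.replicate k 1 ++ [Pj])) := by
        have h3 := pStar_sub_left (d :: (List.replicate k 1 ++ [Pj])) T (a + b)
        rw [hswordP d] at h3
        exact sub_eq_zero.mp h3.symm
      rw [hXd, ← hT, pStar_sub_left, ← h1, ← h2, hA, sub_self]
    have hXKq : ∀ d : A,
        qStar X (φ d :: (List.replicate k (1 : B) ++ [φ Pj])) = 0 := by
      intro d
      have h1 := hq T _ (hlenK d)
      have h2 := hq (a + b) _ (hlenK d)
      rw [hmapK d] at h1 h2
      have hA : qStar T (d :: (List.replicate k 1 ++ [Pj]))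
          = qStar (a + b) (d :: (List.replicate k 1 ++ [Pj])) := by
        have h3 := qStar_sub_left (d :: (List.replicate k 1 ++ [Pj])) T (a + b)
        rw [hswordQ d] at h3
        exact sub_eq_zero.mp h3.symm
      rw [hXd, ← hT, qStar_sub_left, ← h1, ← h2, hA, sub_self]
    -- ===== (A1s) =====
    have hA1s : ∀ H : B, star H = H →
        X * H * φ Pj + φ Pj * (X * H) = 0 := by
      intro H hH
      obtain ⟨d, hdd⟩ := hhalf H hH
      cases k with
      | zero =>
        have relN : ∀ e : A, X * φ e * φ Pj + φ Pj * (X * star (φ e)) = 0 := by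
          intro e
          have h1 := hXKp e
          have h2 := hXKq e
          have h1' : lieStar (lieStar X (φ e)) (φ Pj) = 0 := by
            simpa [pStar_cons, pStar_nil] using h1
          have h2' : jordanStar (jordanStar X (φ e)) (φ Pj) = 0 := by
            simpa [qStar_cons, qStar_nil] using h2
          have e1 : lieStar (lieStar X (φ e)) (φ Pj)
              = (X * φ e - φ e * star X) * φ Pj
                - φ Pj * (star (φ e) * star X - X * star (φ e)) := by
            rw [lieStar, lieStar, star_sub, star_mul, star_mul, star_star]
          have e2 : jordanStar (jordanStar X (φ e)) (φ Pj)
              = (X * φ e + φ e * star X) * φ Pj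
                + φ Pj * (star (φ e) * star X + X * star (φ e)) := by
            rw [jordanStar, jordanStar, star_add, star_mul, star_mul, star_star]
          rw [e1] at h1'
          rw [e2] at h2'
          apply two_nsmul_cancel
          calc X * φ e * φ Pj + φ Pj * (X * star (φ e))
                + (X * φ e * φ Pj + φ Pj * (X * star (φ e)))
              = ((X * φ e - φ e * star X) * φ Pj
                  - φ Pj * (star (φ e) * star X - X * star (φ e)))
                + ((X * φ e + φ e * star X) * φ Pj
                  + φ Pj * (star (φ e) * star X + X * star (φ e))) := by
                simp only [sub_mul, add_mul, mul_sub, mul_add]; abel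
          _ = 0 := by rw [h1', h2', add_zero]
        obtain ⟨d', hd'⟩ := hbij.2 (star (φ d))
        have n1 := relN d
        have n2 := relN d'
        rw [hd', star_star] at n2
        calc X * H * φ Pj + φ Pj * (X * H)
            = (X * φ d * φ Pj + φ Pj * (X * star (φ d)))
              + (X * star (φ d) * φ Pj + φ Pj * (X * φ d)) := by
              rw [← hdd]; simp only [mul_add, add_mul]; abel
        _ = 0 := by rw [n1, n2, add_zero]
      | succ kk =>
        have h1 := hXKp d
        have h2 := hXKq d
        have h1' : lieStar ((2 ^ kk : ℕ) •
            (lieStar X (φ d) - star (lieStar X (φ d)))) (φ Pj) = 0 := by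
          have h : pStar (pStar (lieStar X (φ d)) (List.replicate (kk + 1) (1 : B)))
              [φ Pj] = 0 := by
            rw [← pStar_append, ← pStar_cons]; exact h1
          rw [pStar_one_replicate] at h
          exact h
        have h2' : jordanStar ((2 ^ kk : ℕ) •
            (jordanStar X (φ d) + star (jordanStar X (φ d)))) (φ Pj) = 0 := by
          have h : qStar (qStar (jordanStar X (φ d)) (List.replicate (kk + 1) (1 : B)))
              [φ Pj] = 0 := by
            rw [← qStar_append, ← qStar_cons]; exact h2
          rw [qStar_one_replicate] at h
          exact h
        rw [lieStar_nsmul] at h1'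
        rw [jordanStar_nsmul] at h2'
        have h1'' := nsmul_pow_cancel kk _ h1'
        have h2'' := nsmul_pow_cancel kk _ h2'
        rw [symLie X (φ d), hdd] at h1''
        rw [symJor X (φ d), hdd] at h2''
        have e1 : lieStar (X * H - H * star X) (φ Pj)
            = (X * H - H * star X) * φ Pj - φ Pj * (H * star X - X * H) := by
          rw [lieStar, star_sub, star_mul, star_mul, star_star, hH]
        have e2 : jordanStar (X * H + H * star X) (φ Pj)
            = (X * H + H * star X) * φ Pj + φ Pj * (H * star X + X * H) := by
          rw [jordanStar, star_add, star_mul, star_mul, star_star, hH]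
        rw [e1] at h1''
        rw [e2] at h2''
        apply two_nsmul_cancel
        calc X * H * φ Pj + φ Pj * (X * H) + (X * H * φ Pj + φ Pj * (X * H))
            = ((X * H - H * star X) * φ Pj - φ Pj * (H * star X - X * H))
              + ((X * H + H * star X) * φ Pj + φ Pj * (H * star X + X * H)) := by
              simp only [sub_mul, add_mul, mul_sub, mul_add]; abel
        _ = 0 := by rw [h1'', h2'', add_zero]
    have hA1' : ∀ Z : B, X * Z * φ Pj + φ Pj * (X * Z) = 0 := by
      intro Z
      obtain ⟨H1, H2, hh1, hh2, rfl⟩ := sa_decomp Z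
      have r1 := hA1s H1 hh1
      have r2 := hA1s H2 hh2
      calc X * (H1 + Complex.I • H2) * φ Pj + φ Pj * (X * (H1 + Complex.I • H2))
          = (X * H1 * φ Pj + φ Pj * (X * H1))
            + Complex.I • (X * H2 * φ Pj + φ Pj * (X * H2)) := by
            simp only [mul_add, add_mul, mul_smul_comm, smul_mul_assoc, smul_add]
            abel
      _ = 0 := by rw [r1, r2, smul_zero, add_zero]
    -- ===== slot-2 family =====
    have hslot2P : ∀ r : List A, r.length = k + 1 →
        pStar (lieStar (φ Pj) X) (r.map φ) = 0 := by
      intro r hr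
      have h1 := hP1' Pj T r hr
      have h2 := hP1' Pj (a + b) r hr
      rw [(hsz T hT11 r).1, hφ0] at h1
      rw [(hsz (a + b) hab11 r).1, hφ0] at h2
      have h1' : (0 : B) = pStar (lieStar (φ Pj) (φ T)) (r.map φ) := h1
      have h2' : (0 : B) = pStar (lieStar (φ Pj) (φ (a + b))) (r.map φ) := h2
      rw [hXd, ← hT, ← lieStar_sub_right, pStar_sub_left, ← h1', ← h2', sub_self]
    have hslot2Q : ∀ r : List A, r.length = k + 1 →
        qStar (jordanStar (φ Pj) X) (r.map φ) = 0 := by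
      intro r hr
      have h1 := hQ1' Pj T r hr
      have h2 := hQ1' Pj (a + b) r hr
      rw [(hsz T hT11 r).2, hφ0] at h1
      rw [(hsz (a + b) hab11 r).2, hφ0] at h2
      have h1' : (0 : B) = qStar (jordanStar (φ Pj) (φ T)) (r.map φ) := h1
      have h2' : (0 : B) = qStar (jordanStar (φ Pj) (φ (a + b))) (r.map φ) := h2
      rw [hXd, ← hT, ← jordanStar_sub_right, qStar_sub_left, ← h1', ← h2', sub_self]
    -- ===== (D2) =====
    have hD2 : φ Pj * (X + star X) = 0 := by
      have hp1 := hslot2P (List.replicate (k + 1) 1) List.length_replicate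
      have hq1 := hslot2Q (List.replicate (k + 1) 1) List.length_replicate
      rw [hmapRep, pStar_one_replicate] at hp1
      rw [hmapRep, qStar_one_replicate] at hq1
      have hp2 := nsmul_pow_cancel k _ hp1
      have hq2 := nsmul_pow_cancel k _ hq1
      rw [symLie (φ Pj) X] at hp2
      rw [symJor (φ Pj) X] at hq2
      apply two_nsmul_cancel
      calc φ Pj * (X + star X) + φ Pj * (X + star X)
          = (φ Pj * (X + star X) - (X + star X) * star (φ Pj))
            + (φ Pj * (X + star X) + (X + star X) * star (φ Pj)) := by abel
      _ = 0 := by rw [hp2, hq2, add_zero]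
    -- ===== (D3) =====
    have R1 : ∀ Z : B, (lieStar (φ Pj) X) * Z = Z * star (lieStar (φ Pj) X) := by
      cases k with
      | zero =>
        intro Z
        obtain ⟨z, rfl⟩ := hbij.2 Z
        have h : lieStar (lieStar (φ Pj) X) (φ z) = 0 := hslot2P [z] (by simp)
        rw [lieStar, sub_eq_zero] at h
        exact h
      | succ kk =>
        have key : ∀ H : B, star H = H →
            (lieStar (φ Pj) X) * H = H * star (lieStar (φ Pj) X) := by
          intro H hH
          obtain ⟨z, hzz⟩ := hhalf H hH
          have h := hslot2P (z :: List.replicate (kk + 1) 1) (by simp)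
          have h' : pStar (lieStar (lieStar (φ Pj) X) (φ z))
              ((List.replicate (kk + 1) (1 : A)).map φ) = 0 := h
          rw [hmapRep, pStar_one_replicate] at h'
          have h'' := nsmul_pow_cancel kk _ h'
          rw [symLie (lieStar (φ Pj) X) (φ z), hzz] at h''
          exact sub_eq_zero.mp h''
        intro Z
        obtain ⟨H1, H2, hh1, hh2, rfl⟩ := sa_decomp Z
        calc (lieStar (φ Pj) X) * (H1 + Complex.I • H2)
            = (lieStar (φ Pj) X) * H1 + Complex.I • ((lieStar (φ Pj) X) * H2) := by
              rw [mul_add, mul_smul_comm]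
        _ = H1 * star (lieStar (φ Pj) X)
            + Complex.I • (H2 * star (lieStar (φ Pj) X)) := by
              rw [key H1 hh1, key H2 hh2]
        _ = (H1 + Complex.I • H2) * star (lieStar (φ Pj) X) := by
              rw [add_mul, smul_mul_assoc]
    have R2 : ∀ Z : B, (jordanStar (φ Pj) X) * Z = -(Z * star (jordanStar (φ Pj) X)) := by
      cases k with
      | zero =>
        intro Z
        obtain ⟨z, rfl⟩ := hbij.2 Z
        have h : jordanStar (jordanStar (φ Pj) X) (φ z) = 0 := hslot2Q [z] (by simp)
        rw [jordanStar, add_eq_zero_iff_eq_neg] at h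
        exact h
      | succ kk =>
        have key : ∀ H : B, star H = H →
            (jordanStar (φ Pj) X) * H = -(H * star (jordanStar (φ Pj) X)) := by
          intro H hH
          obtain ⟨z, hzz⟩ := hhalf H hH
          have h := hslot2Q (z :: List.replicate (kk + 1) 1) (by simp)
          have h' : qStar (jordanStar (jordanStar (φ Pj) X) (φ z))
              ((List.replicate (kk + 1) (1 : A)).map φ) = 0 := h
          rw [hmapRep, qStar_one_replicate] at h'
          have h'' := nsmul_pow_cancel kk _ h'
          rw [symJor (jordanStar (φ Pj) X) (φ z), hzz] at h''
          rwa [add_eq_zero_iff_eq_neg] at h''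
        intro Z
        obtain ⟨H1, H2, hh1, hh2, rfl⟩ := sa_decomp Z
        calc (jordanStar (φ Pj) X) * (H1 + Complex.I • H2)
            = (jordanStar (φ Pj) X) * H1
              + Complex.I • ((jordanStar (φ Pj) X) * H2) := by
              rw [mul_add, mul_smul_comm]
        _ = -(H1 * star (jordanStar (φ Pj) X))
            + Complex.I • (-(H2 * star (jordanStar (φ Pj) X))) := by
              rw [key H1 hh1, key H2 hh2]
        _ = -((H1 + Complex.I • H2) * star (jordanStar (φ Pj) X)) := by
              rw [add_mul, smul_mul_assoc, smul_neg, neg_add]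
    have hD3 : ∀ Z : B, (φ Pj * X) * Z = -(Z * (φ Pj * star X)) := by
      intro Z
      have h1 := R1 Z
      have h2 := R2 Z
      have e1 : lieStar (φ Pj) X = φ Pj * X - X * star (φ Pj) := rfl
      have e2 : jordanStar (φ Pj) X = φ Pj * X + X * star (φ Pj) := rfl
      have es1 : star (lieStar (φ Pj) X) = star X * star (φ Pj) - φ Pj * star X := by
        rw [e1, star_sub, star_mul, star_mul, star_star]
      have es2 : star (jordanStar (φ Pj) X) = star X * star (φ Pj) + φ Pj * star X := by
        rw [e2, star_add, star_mul, star_mul, star_star]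
      rw [es1, e1] at h1
      rw [es2, e2] at h2
      have hsum : ((φ Pj * X) * Z + Z * (φ Pj * star X))
          + ((φ Pj * X) * Z + Z * (φ Pj * star X)) = 0 := by
        calc ((φ Pj * X) * Z + Z * (φ Pj * star X))
            + ((φ Pj * X) * Z + Z * (φ Pj * star X))
            = ((φ Pj * X - X * star (φ Pj)) * Z
                - Z * (star X * star (φ Pj) - φ Pj * star X))
              + ((φ Pj * X + X * star (φ Pj)) * Z
                + Z * (star X * star (φ Pj) + φ Pj * star X)) := by
              simp only [sub_mul, add_mul, mul_sub, mul_add]; abel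
        _ = 0 := by
              rw [h1, h2]; abel
      have h0 := two_nsmul_cancel _ hsum
      rwa [add_eq_zero_iff_eq_neg] at h0
    -- ===== conclusion =====
    have h8 : X * φ Pj + φ Pj * X = 0 := by
      have h := hA1' 1
      simpa using h
    have h9 : φ Pj * star X = X * φ Pj := by
      have h := hD2
      rw [mul_add, add_comm, add_eq_zero_iff_eq_neg] at h
      have h8' : X * φ Pj = -(φ Pj * X) := by rwa [add_eq_zero_iff_eq_neg] at h8
      rw [h, h8']
    have h13 : ∀ Z : B, X * Z * φ Pj = Z * (X * φ Pj) := by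
      intro Z
      have hA := hA1' Z
      have hD := hD3 Z
      rw [add_eq_zero_iff_eq_neg] at hA
      calc X * Z * φ Pj = -(φ Pj * (X * Z)) := hA
      _ = -((φ Pj * X) * Z) := by rw [mul_assoc]
      _ = -(-(Z * (φ Pj * star X))) := by rw [hD]
      _ = Z * (φ Pj * star X) := neg_neg _
      _ = Z * (X * φ Pj) := by rw [h9]
    have hc1 : ∀ V : B, X * V = V * X := by
      intro V
      have h := hdagj (X * V - V * X) (fun W => by
        calc (X * V - V * X) * W * φ Pj
            = (X * (V * W)) * φ Pj - (V * (X * W)) * φ Pj := by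
              rw [sub_mul, sub_mul, mul_assoc X V W, mul_assoc V X W]
        _ = (V * W) * (X * φ Pj) - V * ((X * W) * φ Pj) := by
              rw [h13 (V * W), mul_assoc V (X * W) (φ Pj)]
        _ = (V * W) * (X * φ Pj) - V * (W * (X * φ Pj)) := by rw [h13 W]
        _ = 0 := by rw [← mul_assoc V W (X * φ Pj)]; exact sub_self _)
      exact sub_eq_zero.mp h
    have hc2 : X * φ Pj = 0 := by
      have h := h8
      rw [← hc1 (φ Pj)] at h
      exact two_nsmul_cancel _ h
    apply hdagj
    intro Z
    rw [h13 Z, hc2, mul_zero]
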